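/- Gentle Measurement Lemma: if ρ ≥ 0 with Tr ρ ≤ 1, and 0 ≤ X ≤ I with Tr(ρX) ≥ 1 − ε, then the trace-norm distance satisfies ‖ρ − √X ρ √X‖₁ ≤ √(8ε). -/

import Mathlib

open Matrix
open scoped ComplexOrder

/-- The square root of a positive semidefinite matrix (as defined in Mathlib of December 2024,
removed since). -/
noncomputable def Matrix.PosSemidef.sqrt {n 𝕜 : Type*} [Fintype n] [DecidableEq n] [RCLike 𝕜]
    {A : Matrix n n 𝕜} (hA : A.PosSemidef) : Matrix n n 𝕜 :=
  hA.1.eigenvectorUnitary.1 * diagonal ((↑) ∘ (√·) ∘ hA.1.eigenvalues) *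
    (star hA.1.eigenvectorUnitary : Matrix n n 𝕜)

/-- Trace norm `‖A‖₁ = Tr √(A†A)`. -/
noncomputable def traceNorm {ι : Type*} [Fintype ι] [DecidableEq ι]
    (A : Matrix ι ι ℂ) : ℝ :=
  ((Matrix.posSemidef_conjTranspose_mul_self A).sqrt.trace).re

variable {ι : Type*} [Fintype ι] [DecidableEq ι]

open scoped MatrixOrder in
lemma Matrix.PosSemidef.sqrt_eq_cfcSqrt {A : Matrix ι ι ℂ} (hA : A.PosSemidef) :
    hA.sqrt = CFC.sqrt A := by
  rw [CFC.sqrt_eq_real_sqrt A (nonneg_iff_posSemidef.mpr hA), cfcₙ_eq_cfc, hA.1.cfc_eq]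
  simp only [IsHermitian.cfc, Unitary.conjStarAlgAut_apply, Matrix.PosSemidef.sqrt]

open scoped MatrixOrder in
lemma Matrix.PosSemidef.sqrt_mul_self {A : Matrix ι ι ℂ} (hA : A.PosSemidef) :
    hA.sqrt * hA.sqrt = A := by
  rw [hA.sqrt_eq_cfcSqrt]
  exact CFC.sqrt_mul_sqrt_self A (nonneg_iff_posSemidef.mpr hA)

open scoped MatrixOrder in
lemma Matrix.PosSemidef.posSemidef_sqrt {A : Matrix ι ι ℂ} (hA : A.PosSemidef) :
    hA.sqrt.PosSemidef := by
  rw [hA.sqrt_eq_cfcSqrt, ← nonneg_iff_posSemidef]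
  exact CFC.sqrt_nonneg A

open scoped MatrixOrder in
lemma Matrix.PosSemidef.eq_sqrt_of_sq_eq {A B : Matrix ι ι ℂ} (hA : A.PosSemidef)
    (hB : B.PosSemidef) (hAB : A ^ 2 = B) : A = hB.sqrt := by
  rw [hB.sqrt_eq_cfcSqrt]
  exact (CFC.sqrt_unique (by rw [← hAB, pow_two]) (nonneg_iff_posSemidef.mpr hA)).symm

lemma psd_diag_nonneg {P : Matrix ι ι ℂ} (hP : P.PosSemidef) (i : ι) :
    0 ≤ P i i := by
  have := hP.dotProduct_mulVec_nonneg (Pi.single i 1)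
  simpa [dotProduct, Pi.single_apply, Matrix.mulVec] using this

lemma psd_trace_re_nonneg {P : Matrix ι ι ℂ} (hP : P.PosSemidef) :
    0 ≤ (P.trace).re := by
  rw [Matrix.trace, Complex.re_sum]
  exact Finset.sum_nonneg fun i _ => (Complex.le_def.mp (psd_diag_nonneg hP i)).1

lemma psd_mul_trace_re_nonneg {P Q : Matrix ι ι ℂ} (hP : P.PosSemidef) (hQ : Q.PosSemidef) :
    0 ≤ ((P * Q).trace).re := by
  have h1 : P * Q = hP.sqrt * hP.sqrt * Q := by rw [hP.sqrt_mul_self]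
  have h2 : (P * Q).trace = (hP.sqrt * Q * hP.sqrt).trace := by
    rw [h1, ← trace_mul_cycle]
  rw [h2]
  refine psd_trace_re_nonneg ?_
  have := hQ.mul_mul_conjTranspose_same hP.sqrt
  rwa [hP.posSemidef_sqrt.1.eq] at this

lemma trace_conjTranspose_mul_re (A : Matrix ι ι ℂ) :
    ((Aᴴ * A).trace).re = ∑ i, ∑ j, ‖A j i‖ ^ 2 := by
  simp only [Matrix.trace, Matrix.diag, Matrix.mul_apply, Matrix.conjTranspose_apply,
    Complex.re_sum]
  congr 1; ext i; congr 1; ext j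
  rw [show star (A j i) = (starRingEnd ℂ) (A j i) from rfl,
    ← Complex.normSq_eq_conj_mul_self, Complex.ofReal_re, Complex.sq_norm]

lemma cauchy_schwarz_trace (A B : Matrix ι ι ℂ) :
    ((Aᴴ * B).trace).re ≤
      Real.sqrt ((Aᴴ * A).trace).re * Real.sqrt ((Bᴴ * B).trace).re := by
  have hre : ((Aᴴ * B).trace).re = ∑ i, ∑ j, (((starRingEnd ℂ) (A j i)) * B j i).re := by
    simp only [Matrix.trace, Matrix.diag, Matrix.mul_apply, Matrix.conjTranspose_apply,
      Complex.re_sum]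
    rfl
  have step1 : ((Aᴴ * B).trace).re ≤ ∑ i, ∑ j, ‖A j i‖ * ‖B j i‖ := by
    rw [hre]
    refine Finset.sum_le_sum fun i _ => Finset.sum_le_sum fun j _ => ?_
    calc (((starRingEnd ℂ) (A j i)) * B j i).re ≤ ‖((starRingEnd ℂ) (A j i)) * B j i‖ :=
          Complex.re_le_norm _
      _ = ‖A j i‖ * ‖B j i‖ := by
          rw [norm_mul, Complex.norm_conj]
  refine step1.trans ?_
  rw [trace_conjTranspose_mul_re, trace_conjTranspose_mul_re, ← Real.sqrt_mul
    (by positivity)]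
  rw [← Finset.sum_product', ← Finset.sum_product', ← Finset.sum_product']
  refine Real.le_sqrt_of_sq_le ?_
  simpa using Finset.sum_mul_sq_le_sq_mul_sq Finset.univ
    (fun p : ι × ι => ‖A p.2 p.1‖) (fun p : ι × ι => ‖B p.2 p.1‖)

lemma sandwich_mul {V A B : Matrix ι ι ℂ} (hV1 : Vᴴ * V = 1) :
    (V * A * Vᴴ) * (V * B * Vᴴ) = V * (A * B) * Vᴴ := by
  calc (V * A * Vᴴ) * (V * B * Vᴴ) = V * A * (Vᴴ * V) * B * Vᴴ := by
        simp only [Matrix.mul_assoc]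
    _ = V * (A * B) * Vᴴ := by rw [hV1]; simp only [Matrix.mul_assoc, Matrix.one_mul]

lemma trace_sandwich {V A : Matrix ι ι ℂ} (hV1 : Vᴴ * V = 1) :
    (V * A * Vᴴ).trace = A.trace := by
  rw [trace_mul_cycle, hV1, one_mul]

lemma traceNorm_hermitian_le {A : Matrix ι ι ℂ} (hA : A.IsHermitian) {c : ℝ}
    (h : ∀ U : Matrix ι ι ℂ, Uᴴ * U = 1 → ((U * A).trace).re ≤ c) :
    traceNorm A ≤ c := by
  set V : Matrix ι ι ℂ := (hA.eigenvectorUnitary : Matrix ι ι ℂ) with hV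
  have hV1 : Vᴴ * V = 1 := by
    rw [← Matrix.star_eq_conjTranspose]
    exact Matrix.mem_unitaryGroup_iff'.mp hA.eigenvectorUnitary.2
  have hV2 : V * Vᴴ = 1 := by
    rw [← Matrix.star_eq_conjTranspose]
    exact Matrix.mem_unitaryGroup_iff.mp hA.eigenvectorUnitary.2
  set μ : ι → ℝ := hA.eigenvalues with hμ
  have hspec : A = V * diagonal (fun i => ((μ i : ℝ) : ℂ)) * Vᴴ := by
    rw [← Matrix.star_eq_conjTranspose]
    exact hA.spectral_theorem
  set P : Matrix ι ι ℂ := V * diagonal (fun i => ((|μ i| : ℝ) : ℂ)) * Vᴴ with hPdef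
  have hP : P.PosSemidef := by
    refine PosSemidef.mul_mul_conjTranspose_same ?_ V
    refine posSemidef_diagonal_iff.mpr fun i => ?_
    rw [Complex.le_def]
    simp [abs_nonneg]
  have hPsq : P ^ 2 = Aᴴ * A := by
    rw [hA.eq, pow_two, hPdef, hspec, sandwich_mul hV1, sandwich_mul hV1,
      diagonal_mul_diagonal, diagonal_mul_diagonal]
    have : (fun i => ((|μ i| : ℝ) : ℂ) * ((|μ i| : ℝ) : ℂ))
        = (fun i => ((μ i : ℝ) : ℂ) * ((μ i : ℝ) : ℂ)) := by
      funext i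
      rw [← Complex.ofReal_mul, ← Complex.ofReal_mul, abs_mul_abs_self]
    rw [this]
  have hsqrt : (Matrix.posSemidef_conjTranspose_mul_self A).sqrt = P :=
    (hP.eq_sqrt_of_sq_eq (Matrix.posSemidef_conjTranspose_mul_self A) hPsq).symm
  have htn : traceNorm A = ∑ i, |μ i| := by
    rw [traceNorm, hsqrt, hPdef, trace_sandwich hV1, trace_diagonal, Complex.re_sum]
    simp
  set s : ι → ℝ := fun i => if μ i < 0 then -1 else 1 with hsdef
  set U : Matrix ι ι ℂ := V * diagonal (fun i => ((s i : ℝ) : ℂ)) * Vᴴ with hUdef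
  have hUH : Uᴴ = U := by
    rw [hUdef, conjTranspose_mul, conjTranspose_mul, conjTranspose_conjTranspose,
      diagonal_conjTranspose]
    have : star (fun i => ((s i : ℝ) : ℂ)) = fun i => ((s i : ℝ) : ℂ) := by
      ext i; simp [Pi.star_apply, Complex.star_def, Complex.conj_ofReal]
    rw [this, Matrix.mul_assoc]
  have hUU : Uᴴ * U = 1 := by
    rw [hUH, hUdef, sandwich_mul hV1, diagonal_mul_diagonal]
    have : (fun i => ((s i : ℝ) : ℂ) * ((s i : ℝ) : ℂ)) = fun _ => (1 : ℂ) := by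
      ext i
      rw [← Complex.ofReal_mul]
      have hs : s i * s i = 1 := by rw [hsdef]; dsimp only; split <;> norm_num
      rw [hs, Complex.ofReal_one]
    rw [this, diagonal_one, mul_one, hV2]
  have htr : ((U * A).trace).re = ∑ i, |μ i| := by
    rw [hUdef, hspec, sandwich_mul hV1, diagonal_mul_diagonal, trace_sandwich hV1,
      trace_diagonal, Complex.re_sum]
    congr 1; ext i
    rw [← Complex.ofReal_mul, Complex.ofReal_re, hsdef]
    dsimp only
    split <;> rename_i hlt
    · rw [abs_of_neg hlt]; ring
    · rw [abs_of_nonneg (not_lt.mp hlt)]; ring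
  rw [htn, ← htr]
  exact h U hUU

lemma eigenvalues_le_one {X : Matrix ι ι ℂ} (hX : X.PosSemidef) (hXle : (1 - X).PosSemidef)
    (i : ι) : hX.1.eigenvalues i ≤ 1 := by
  set v : ι → ℂ := ⇑(hX.1.eigenvectorBasis i) with hv
  have hnorm : dotProduct (star v) v = 1 := by
    have h := hX.1.eigenvectorBasis.orthonormal
    rw [orthonormal_iff_ite] at h
    have h2 := h i i
    rw [EuclideanSpace.inner_eq_star_dotProduct, dotProduct_comm] at h2
    simpa using h2
  have hmul : X *ᵥ v = (hX.1.eigenvalues i : ℂ) • v := by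
    have := hX.1.mulVec_eigenvectorBasis i
    rw [← hv] at this
    rw [this]
    ext j
    simp [RCLike.real_smul_eq_coe_smul (K := ℂ)]
  have h2 := hXle.dotProduct_mulVec_nonneg v
  rw [sub_mulVec, one_mulVec, dotProduct_sub, hnorm, hmul, dotProduct_smul, hnorm,
    smul_eq_mul, mul_one] at h2
  have := (Complex.le_def.mp h2).1
  simp only [Complex.zero_re, Complex.sub_re, Complex.one_re, Complex.ofReal_re] at this
  linarith

lemma sqrt_sub_self_posSemidef {X : Matrix ι ι ℂ} (hX : X.PosSemidef)
    (hXle : (1 - X).PosSemidef) : (hX.sqrt - X).PosSemidef := by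
  set V : Matrix ι ι ℂ := (hX.1.eigenvectorUnitary : Matrix ι ι ℂ) with hV
  set lam : ι → ℝ := hX.1.eigenvalues with hlam
  have hspec : X = V * diagonal (fun i => ((lam i : ℝ) : ℂ)) * Vᴴ := by
    rw [← Matrix.star_eq_conjTranspose]
    exact hX.1.spectral_theorem
  have hsq : hX.sqrt = V * diagonal (fun i => ((Real.sqrt (lam i) : ℝ) : ℂ)) * Vᴴ := by
    rw [← Matrix.star_eq_conjTranspose]
    rfl
  rw [hsq]
  nth_rewrite 1 [hspec]
  rw [← Matrix.sub_mul, ← Matrix.mul_sub, diagonal_sub]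
  refine PosSemidef.mul_mul_conjTranspose_same ?_ V
  refine posSemidef_diagonal_iff.mpr fun i => ?_
  have h1 : lam i ≤ Real.sqrt (lam i) := by
    have h0 : 0 ≤ lam i := hX.eigenvalues_nonneg i
    have h2 : lam i ≤ 1 := eigenvalues_le_one hX hXle i
    nlinarith [Real.sq_sqrt h0, Real.sqrt_nonneg (lam i)]
  rw [← Complex.ofReal_sub, Complex.le_def]
  constructor
  · simpa using h1
  · simp

/-- Gentle Measurement Lemma: if `ρ ≥ 0`, `Tr ρ ≤ 1`, `0 ≤ X ≤ I` and
`Tr(ρX) ≥ 1 − ε`, then `‖ρ − √X ρ √X‖₁ ≤ √(8ε)`. -/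
theorem gentle_measurement {d : ℕ} (ρ X : Matrix (Fin d) (Fin d) ℂ)
    (hρ : ρ.PosSemidef) (htr : (ρ.trace).re ≤ 1)
    (hX : X.PosSemidef) (hXle : (1 - X).PosSemidef)
    (ε : ℝ) (hε : 0 ≤ ε) (hε1 : ε ≤ 1)
    (hgood : 1 - ε ≤ ((ρ * X).trace).re) :
    traceNorm (ρ - hX.sqrt * ρ * hX.sqrt) ≤ Real.sqrt (8 * ε) := by
  set S := hX.sqrt with hSdef
  have hSH : Sᴴ = S := hX.posSemidef_sqrt.1
  have hSS : S * S = X := hX.sqrt_mul_self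
  set R := hρ.sqrt with hRdef
  have hRH : Rᴴ = R := hρ.posSemidef_sqrt.1
  have hRR : R * R = ρ := hρ.sqrt_mul_self
  set T : Matrix (Fin d) (Fin d) ℂ := 1 - S with hTdef
  have hTH : Tᴴ = T := by rw [hTdef, conjTranspose_sub, conjTranspose_one, hSH]
  have hA : (ρ - S * ρ * S).IsHermitian := by
    refine IsHermitian.sub hρ.1 ?_
    show (S * ρ * S)ᴴ = S * ρ * S
    rw [conjTranspose_mul, conjTranspose_mul, hSH, hρ.1.eq, ← Matrix.mul_assoc]
  set r := (ρ.trace).re with hrdef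
  have hr0 : 0 ≤ r := psd_trace_re_nonneg hρ
  have hTρT : (T * ρ * T).PosSemidef := by
    have := hρ.mul_mul_conjTranspose_same T; rwa [hTH] at this
  set t := ((T * ρ * T).trace).re with htdef
  have ht0 : 0 ≤ t := psd_trace_re_nonneg hTρT
  -- t ≤ ε
  have hSX : (S - X).PosSemidef := sqrt_sub_self_posSemidef hX hXle
  have hSXtr : 0 ≤ (((S - X) * ρ).trace).re := psd_mul_trace_re_nonneg hSX hρ
  have hSρtr : ((ρ * X).trace).re ≤ ((S * ρ).trace).re := by
    rw [Matrix.sub_mul, trace_sub, Complex.sub_re] at hSXtr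
    have hXρ : (X * ρ).trace = (ρ * X).trace := trace_mul_comm X ρ
    rw [hXρ] at hSXtr
    linarith
  have hTT : (T * ρ * T).trace = ρ.trace - (S * ρ).trace - (ρ * S).trace + (ρ * X).trace := by
    have e : T * ρ * T = ρ - S * ρ - ρ * S + S * ρ * S := by rw [hTdef]; noncomm_ring
    rw [e, trace_add, trace_sub, trace_sub]
    congr 1
    rw [trace_mul_cycle, hSS, trace_mul_comm]
  have hρS_eq : (ρ * S).trace = (S * ρ).trace := trace_mul_comm ρ S
  have htle : t ≤ ε := by
    have h1 : t = r - 2 * ((S * ρ).trace).re + ((ρ * X).trace).re := by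
      rw [htdef, hTT, hρS_eq, Complex.add_re, Complex.sub_re, Complex.sub_re]
      ring
    linarith
  -- main bound
  have main : ∀ U : Matrix (Fin d) (Fin d) ℂ, Uᴴ * U = 1 →
      ((U * (ρ - S * ρ * S)).trace).re ≤ 2 * Real.sqrt ε := by
    intro U hU
    have hsplit : U * (ρ - S * ρ * S) = U * ρ * T + U * (T * ρ * S) := by
      rw [hTdef]; noncomm_ring
    rw [hsplit, trace_add, Complex.add_re]
    -- Term 1
    have c1 := cauchy_schwarz_trace (R * Uᴴ) (R * T)
    have e1 : (R * Uᴴ)ᴴ * (R * T) = U * ρ * T := by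
      rw [conjTranspose_mul, conjTranspose_conjTranspose, hRH, ← hRR]
      simp only [Matrix.mul_assoc]
    have eA1 : (R * Uᴴ)ᴴ * (R * Uᴴ) = U * ρ * Uᴴ := by
      rw [conjTranspose_mul, conjTranspose_conjTranspose, hRH, ← hRR]
      simp only [Matrix.mul_assoc]
    have eB1 : (R * T)ᴴ * (R * T) = T * ρ * T := by
      rw [conjTranspose_mul, hRH, hTH, ← hRR]
      simp only [Matrix.mul_assoc]
    have trA1 : ((U * ρ * Uᴴ).trace).re = r := by
      rw [trace_mul_cycle, hU, one_mul]
    rw [e1, eA1, eB1, trA1, ← htdef] at c1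
    -- Term 2
    have c2 := cauchy_schwarz_trace (R * T * Uᴴ * S) R
    have e2 : (R * T * Uᴴ * S)ᴴ * R = S * (U * (T * ρ)) := by
      rw [conjTranspose_mul, conjTranspose_mul, conjTranspose_mul,
        conjTranspose_conjTranspose, hRH, hTH, hSH, ← hRR]
      simp only [Matrix.mul_assoc]
    have htr2 : ((R * T * Uᴴ * S)ᴴ * R).trace = (U * (T * ρ * S)).trace := by
      rw [e2, trace_mul_comm]
      congr 1
      simp only [Matrix.mul_assoc]
    have trB2 : ((Rᴴ * R).trace).re = r := by rw [hRH, hRR]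
    set N : Matrix (Fin d) (Fin d) ℂ := U * (T * ρ * T) * Uᴴ with hNdef
    have hN : N.PosSemidef := hTρT.mul_mul_conjTranspose_same U
    have trN : (N.trace).re = t := by
      rw [hNdef, trace_mul_cycle, hU, one_mul]
    have eAA2 : (R * T * Uᴴ * S)ᴴ * (R * T * Uᴴ * S) = S * N * S := by
      rw [conjTranspose_mul, conjTranspose_mul, conjTranspose_mul,
        conjTranspose_conjTranspose, hRH, hTH, hSH, hNdef, ← hRR]
      simp only [Matrix.mul_assoc]
    have trAA2 : (((R * T * Uᴴ * S)ᴴ * (R * T * Uᴴ * S)).trace).re ≤ t := by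
      rw [eAA2, trace_mul_cycle, hSS]
      have h0 : 0 ≤ (((1 - X) * N).trace).re := psd_mul_trace_re_nonneg hXle hN
      rw [Matrix.sub_mul, Matrix.one_mul, trace_sub, Complex.sub_re] at h0
      linarith
    rw [htr2] at c2
    -- combine
    have hsr : Real.sqrt r ≤ 1 := by
      rw [show (1 : ℝ) = Real.sqrt 1 by rw [Real.sqrt_one]]
      exact Real.sqrt_le_sqrt htr
    have hst : Real.sqrt t ≤ Real.sqrt ε := Real.sqrt_le_sqrt htle
    have b1 : ((U * ρ * T).trace).re ≤ Real.sqrt ε := by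
      calc ((U * ρ * T).trace).re ≤ Real.sqrt r * Real.sqrt t := c1
        _ ≤ 1 * Real.sqrt ε := by
            exact mul_le_mul hsr hst (Real.sqrt_nonneg t) zero_le_one
        _ = Real.sqrt ε := one_mul _
    have b2 : ((U * (T * ρ * S)).trace).re ≤ Real.sqrt ε := by
      calc ((U * (T * ρ * S)).trace).re
          ≤ Real.sqrt (((R * T * Uᴴ * S)ᴴ * (R * T * Uᴴ * S)).trace).re
            * Real.sqrt ((Rᴴ * R).trace).re := c2
        _ ≤ Real.sqrt t * Real.sqrt r := by
            refine mul_le_mul (Real.sqrt_le_sqrt trAA2) ?_ (Real.sqrt_nonneg _) (Real.sqrt_nonneg _)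
            rw [trB2]
        _ ≤ Real.sqrt ε * 1 := mul_le_mul hst hsr (Real.sqrt_nonneg r) (Real.sqrt_nonneg ε)
        _ = Real.sqrt ε := mul_one _
    linarith
  refine (traceNorm_hermitian_le hA main).trans ?_
  have h2 : (2 * Real.sqrt ε) ^ 2 ≤ 8 * ε := by
    have := Real.sq_sqrt hε
    nlinarith
  exact Real.le_sqrt_of_sq_le h2
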